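/- The receive functor is a monoidal functor into lenses (Proposition 35, second half). Precisely: let (C, ⊗, I, σ) be a symmetric monoidal category and let Lens(C) be the monoidal category of monoidal lenses with unit (I,I) and tensor (A,B) ⊗ (X,Y) = (A ⊗ X, B ⊗ Y). The assignment Get(A) = (I, A) on objects and, for a morphism A ⟶ B of Cᵒᵖ given by f : B ⟶ A in C, Get(f) = the class of (I, λ_I⁻¹ : I ⟶ I ⊗ I, λ_B ≫ f : I ⊗ B ⟶ A) in LC((I,A);(I,B)), is a functor Cᵒᵖ → Lens(C); moreover it is a (strong) monoidal functor, with structure isomorphisms Get(A) ⊗ Get(B) = (I ⊗ I, A ⊗ B) ≅ (I, A ⊗ B) = Get(A ⊗ B) induced by the unitor of C, and (I,I) = Get(I). -/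

import Mathlib

/-!
The receive functor is a strong monoidal functor into lenses.
-/

open CategoryTheory MonoidalCategory

universe v u

/- Local notation for the monoidal tensor of objects and of morphisms
(the same operations as `⊗`, named directly to speed up elaboration). -/
local infixr:70 " ⊠ " => MonoidalCategoryStruct.tensorObj
local infixr:70 " ⊠ₕ " => MonoidalCategoryStruct.tensorHom

variable {C : Type u} [Category.{v} C] [MonoidalCategory C] [SymmetricCategory C]

/-- A representative of a monoidal lens from `(A,B)` to `(X,Y)`. -/
structure LensRep (A B X Y : C) where
  M : C
  f : A ⟶ M ⊠ X
  g : M ⊠ Y ⟶ B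

/-- Dinaturality in the residual. -/
inductive LensRel (A B X Y : C) : LensRep A B X Y → LensRep A B X Y → Prop
  | dinat {M M' : C} (m : M ⟶ M') (f : A ⟶ M ⊠ X) (g' : M' ⊠ Y ⟶ B) :
      LensRel A B X Y ⟨M', f ≫ (m ⊠ₕ 𝟙 X), g'⟩ ⟨M, f, (m ⊠ₕ 𝟙 Y) ≫ g'⟩

/-- Monoidal lenses. -/
abbrev LC (A B X Y : C) : Type max u v := Quot (LensRel A B X Y)

/-- The identity lens on `(A,B)`. -/
def lensId (A B : C) : LC A B A B :=
  Quot.mk _ ⟨𝟙_ C, (λ_ A).inv, (λ_ B).hom⟩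

/-- The lens induced by a pair of isomorphisms, with trivial residual. -/
def lensOfIsos {A B X Y : C} (u : A ≅ X) (v : Y ≅ B) : LC A B X Y :=
  Quot.mk _ ⟨𝟙_ C, u.hom ≫ (λ_ X).inv, (λ_ Y).hom ≫ v.hom⟩

/-- The evident associator lens. -/
def assocLens (A₁ B₁ A₂ B₂ A₃ B₃ : C) :
    LC ((A₁ ⊠ A₂) ⊠ A₃) ((B₁ ⊠ B₂) ⊠ B₃) (A₁ ⊠ (A₂ ⊠ A₃)) (B₁ ⊠ (B₂ ⊠ B₃)) :=
  lensOfIsos (α_ A₁ A₂ A₃) (α_ B₁ B₂ B₃).symm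

/-- The evident left unitor lens. -/
def leftUnitorLens (A B : C) : LC (𝟙_ C ⊠ A) (𝟙_ C ⊠ B) A B :=
  lensOfIsos (λ_ A) (λ_ B).symm

/-- The evident right unitor lens. -/
def rightUnitorLens (A B : C) : LC (A ⊠ 𝟙_ C) (B ⊠ 𝟙_ C) A B :=
  lensOfIsos (ρ_ A) (ρ_ B).symm

/-- The action of the receive functor on an opposite morphism, given by
`f : B ⟶ A` in `C`: the lens from `(I,A)` to `(I,B)` with trivial residual,
forward part `λ_I⁻¹` and backward part `λ_B ≫ f`. -/
def getHom {A B : C} (f : B ⟶ A) : LC (𝟙_ C) A (𝟙_ C) B :=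
  Quot.mk _ ⟨𝟙_ C, (λ_ (𝟙_ C)).inv, (λ_ B).hom ≫ f⟩

/-- The monoidal structure isomorphism `Get A ⊗ Get B ≅ Get (A ⊗ B)`, induced
by the unitor of `C`. -/
def getMu (A B : C) : LC (𝟙_ C ⊠ 𝟙_ C) (A ⊠ B) (𝟙_ C) (A ⊠ B) :=
  lensOfIsos (λ_ (𝟙_ C)) (Iso.refl (A ⊠ B))

/-- The inverse of `getMu`. -/
def getMuInv (A B : C) : LC (𝟙_ C) (A ⊠ B) (𝟙_ C ⊠ 𝟙_ C) (A ⊠ B) :=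
  lensOfIsos (λ_ (𝟙_ C)).symm (Iso.refl (A ⊠ B))


section LensAuxiliary

set_option linter.unusedSectionVars false

theorem lens_sound {A B X Y M M' : C} (m : M ⟶ M') {f' : A ⟶ M' ⊠ X} (f : A ⟶ M ⊠ X)
    {g : M ⊠ Y ⟶ B} (g' : M' ⊠ Y ⟶ B)
    (hf : f' = f ≫ (m ⊠ₕ 𝟙 X)) (hg : g = (m ⊠ₕ 𝟙 Y) ≫ g') :
    (Quot.mk (LensRel A B X Y) ⟨M', f', g'⟩ : LC A B X Y) = Quot.mk _ ⟨M, f, g⟩ := by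
  subst hf hg; exact Quot.sound (LensRel.dinat m f g')

theorem lensRep_eq {A B X Y M : C} {f₁ f₂ : A ⟶ M ⊠ X} {g₁ g₂ : M ⊠ Y ⟶ B}
    (hf : f₁ = f₂) (hg : g₁ = g₂) :
    (Quot.mk (LensRel A B X Y) ⟨M, f₁, g₁⟩ : LC A B X Y) = Quot.mk _ ⟨M, f₂, g₂⟩ := by
  subst hf hg; rfl

theorem lens_move {A B X Y M M' : C} (φ : M' ≅ M) (f : A ⟶ M ⊠ X) (g : M ⊠ Y ⟶ B) :
    (Quot.mk (LensRel A B X Y) ⟨M, f, g⟩ : LC A B X Y) =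
      Quot.mk _ ⟨M', f ≫ (φ.inv ⊠ₕ 𝟙 X), (φ.hom ⊠ₕ 𝟙 Y) ≫ g⟩ := by
  apply lens_sound φ.hom _ _ _ rfl
  rw [Category.assoc, MonoidalCategory.tensorHom_comp_tensorHom]
  simp

/-- Composition on representatives. -/
def compRep {A B X Y X' Y' : C} (r : LensRep A B X Y) (s : LensRep X Y X' Y') :
    LensRep A B X' Y' :=
  ⟨r.M ⊠ s.M, r.f ≫ (𝟙 r.M ⊠ₕ s.f) ≫ (α_ r.M s.M X').inv,
    (α_ r.M s.M Y').hom ≫ (𝟙 r.M ⊠ₕ s.g) ≫ r.g⟩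

/-- Composition of lenses. -/
def lensComp {A B X Y X' Y' : C} : LC A B X Y → LC X Y X' Y' → LC A B X' Y' :=
  Quot.lift₂ (fun r s => Quot.mk _ (compRep r s))
    (fun r _ _ h => by
      obtain ⟨n, h0, k'⟩ := h
      apply lens_sound (𝟙 r.M ⊠ₕ n) <;> simp only [compRep] <;>
        simp [MonoidalCategory.tensorHom_def, MonoidalCategory.whisker_exchange])
    (fun _ _ s h => by
      obtain ⟨m, f0, g'⟩ := h
      apply lens_sound (m ⊠ₕ 𝟙 s.M)
      · simp only [compRep, MonoidalCategory.tensorHom_id, MonoidalCategory.id_tensorHom,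
          Category.assoc]
        rw [← MonoidalCategory.whisker_exchange_assoc]
        simp [MonoidalCategory.associator_inv_naturality_left]
      · simp only [compRep, MonoidalCategory.tensorHom_id, MonoidalCategory.id_tensorHom,
          Category.assoc]
        rw [MonoidalCategory.whisker_exchange_assoc,
          ← MonoidalCategory.associator_naturality_left_assoc])

/-- Tensor on representatives. -/
def tensRep {A₁ B₁ X₁ Y₁ A₂ B₂ X₂ Y₂ : C}
    (r : LensRep A₁ B₁ X₁ Y₁) (s : LensRep A₂ B₂ X₂ Y₂) :
    LensRep (A₁ ⊠ A₂) (B₁ ⊠ B₂) (X₁ ⊠ X₂) (Y₁ ⊠ Y₂) :=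
  ⟨r.M ⊠ s.M, (r.f ⊠ₕ s.f) ≫ tensorμ r.M X₁ s.M X₂,
    tensorμ r.M s.M Y₁ Y₂ ≫ (r.g ⊠ₕ s.g)⟩

/-- Tensor of lenses. -/
def lensTens {A₁ B₁ X₁ Y₁ A₂ B₂ X₂ Y₂ : C} :
    LC A₁ B₁ X₁ Y₁ → LC A₂ B₂ X₂ Y₂ →
      LC (A₁ ⊠ A₂) (B₁ ⊠ B₂) (X₁ ⊠ X₂) (Y₁ ⊠ Y₂) :=
  Quot.lift₂ (fun r s => Quot.mk _ (tensRep r s))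
    (fun r _ _ h => by
      obtain ⟨n, h0, k'⟩ := h
      apply lens_sound (𝟙 r.M ⊠ₕ n)
      · show (r.f ⊠ₕ h0 ≫ (n ⊠ₕ 𝟙 X₂)) ≫ tensorμ _ _ _ _ = _
        calc (r.f ⊠ₕ h0 ≫ (n ⊠ₕ 𝟙 X₂)) ≫ tensorμ r.M X₁ _ X₂
            = (r.f ⊠ₕ h0) ≫ (((𝟙 r.M ⊠ₕ 𝟙 X₁) ⊠ₕ (n ⊠ₕ 𝟙 X₂)) ≫ tensorμ r.M X₁ _ X₂) := by
              rw [← Category.assoc, MonoidalCategory.tensorHom_comp_tensorHom]; simp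
          _ = (r.f ⊠ₕ h0) ≫ tensorμ r.M X₁ _ X₂ ≫ ((𝟙 r.M ⊠ₕ n) ⊠ₕ (𝟙 X₁ ⊠ₕ 𝟙 X₂)) := by
              rw [tensorμ_natural]
          _ = ((r.f ⊠ₕ h0) ≫ tensorμ r.M X₁ _ X₂) ≫ ((𝟙 r.M ⊠ₕ n) ⊠ₕ 𝟙 (X₁ ⊠ X₂)) := by simp
      · show _ = ((𝟙 r.M ⊠ₕ n) ⊠ₕ 𝟙 (Y₁ ⊠ Y₂)) ≫ tensorμ r.M _ Y₁ Y₂ ≫ (r.g ⊠ₕ k')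
        calc tensorμ r.M _ Y₁ Y₂ ≫ (r.g ⊠ₕ (n ⊠ₕ 𝟙 Y₂) ≫ k')
            = (tensorμ r.M _ Y₁ Y₂ ≫ ((𝟙 r.M ⊠ₕ 𝟙 Y₁) ⊠ₕ (n ⊠ₕ 𝟙 Y₂))) ≫ (r.g ⊠ₕ k') := by
              rw [Category.assoc, MonoidalCategory.tensorHom_comp_tensorHom]; simp
          _ = (((𝟙 r.M ⊠ₕ n) ⊠ₕ (𝟙 Y₁ ⊠ₕ 𝟙 Y₂)) ≫ tensorμ r.M _ Y₁ Y₂) ≫ (r.g ⊠ₕ k') := by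
              rw [tensorμ_natural]
          _ = ((𝟙 r.M ⊠ₕ n) ⊠ₕ 𝟙 (Y₁ ⊠ Y₂)) ≫ tensorμ r.M _ Y₁ Y₂ ≫ (r.g ⊠ₕ k') := by simp)
    (fun _ _ s h => by
      obtain ⟨m, f0, g'⟩ := h
      apply lens_sound (m ⊠ₕ 𝟙 s.M)
      · show ((f0 ≫ (m ⊠ₕ 𝟙 X₁)) ⊠ₕ s.f) ≫ tensorμ _ X₁ s.M X₂ = _
        calc ((f0 ≫ (m ⊠ₕ 𝟙 X₁)) ⊠ₕ s.f) ≫ tensorμ _ X₁ s.M X₂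
            = (f0 ⊠ₕ s.f) ≫ (((m ⊠ₕ 𝟙 X₁) ⊠ₕ (𝟙 s.M ⊠ₕ 𝟙 X₂)) ≫ tensorμ _ X₁ s.M X₂) := by
              rw [← Category.assoc, MonoidalCategory.tensorHom_comp_tensorHom]; simp
          _ = (f0 ⊠ₕ s.f) ≫ tensorμ _ X₁ s.M X₂ ≫ ((m ⊠ₕ 𝟙 s.M) ⊠ₕ (𝟙 X₁ ⊠ₕ 𝟙 X₂)) := by
              rw [tensorμ_natural]
          _ = ((f0 ⊠ₕ s.f) ≫ tensorμ _ X₁ s.M X₂) ≫ ((m ⊠ₕ 𝟙 s.M) ⊠ₕ 𝟙 (X₁ ⊠ X₂)) := by simp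
      · show _ = ((m ⊠ₕ 𝟙 s.M) ⊠ₕ 𝟙 (Y₁ ⊠ Y₂)) ≫ tensorμ _ s.M Y₁ Y₂ ≫ (g' ⊠ₕ s.g)
        calc tensorμ _ s.M Y₁ Y₂ ≫ (((m ⊠ₕ 𝟙 Y₁) ≫ g') ⊠ₕ s.g)
            = (tensorμ _ s.M Y₁ Y₂ ≫ ((m ⊠ₕ 𝟙 Y₁) ⊠ₕ (𝟙 s.M ⊠ₕ 𝟙 Y₂))) ≫ (g' ⊠ₕ s.g) := by
              rw [Category.assoc, MonoidalCategory.tensorHom_comp_tensorHom]; simp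
          _ = (((m ⊠ₕ 𝟙 s.M) ⊠ₕ (𝟙 Y₁ ⊠ₕ 𝟙 Y₂)) ≫ tensorμ _ s.M Y₁ Y₂) ≫ (g' ⊠ₕ s.g) := by
              rw [tensorμ_natural]
          _ = ((m ⊠ₕ 𝟙 s.M) ⊠ₕ 𝟙 (Y₁ ⊠ Y₂)) ≫ tensorμ _ s.M Y₁ Y₂ ≫ (g' ⊠ₕ s.g) := by simp)

theorem lensComp_mk {A B X Y X' Y' : C} (r : LensRep A B X Y) (s : LensRep X Y X' Y') :
    lensComp (Quot.mk _ r) (Quot.mk _ s) = Quot.mk _ (compRep r s) := rfl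

theorem lensTens_mk {A₁ B₁ X₁ Y₁ A₂ B₂ X₂ Y₂ : C}
    (r : LensRep A₁ B₁ X₁ Y₁) (s : LensRep A₂ B₂ X₂ Y₂) :
    lensTens (Quot.mk _ r) (Quot.mk _ s) = Quot.mk _ (tensRep r s) := rfl

end LensAuxiliary

/-- The assignment `A ↦ (I,A)`, `f ↦ getHom f` is a functor from `Cᵒᵖ` to the
category of monoidal lenses, and it is strong monoidal for the monoidal
structure of lenses, with structure isomorphisms induced by the unitor. -/
theorem get_is_monoidal_functor (C : Type u) [Category.{v} C] [MonoidalCategory C]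
    [SymmetricCategory C] :
    ∃ (comp : ∀ (A B X Y X' Y' : C), LC A B X Y → LC X Y X' Y' → LC A B X' Y')
      (tens : ∀ (A₁ B₁ X₁ Y₁ A₂ B₂ X₂ Y₂ : C),
        LC A₁ B₁ X₁ Y₁ → LC A₂ B₂ X₂ Y₂ →
          LC (A₁ ⊠ A₂) (B₁ ⊠ B₂) (X₁ ⊠ X₂) (Y₁ ⊠ Y₂)),
      -- composition is substitution of representatives
      (∀ (A B X Y X' Y' : C) (r : LensRep A B X Y) (s : LensRep X Y X' Y'),
          comp A B X Y X' Y' (Quot.mk _ r) (Quot.mk _ s) =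
            Quot.mk _ ⟨r.M ⊠ s.M,
              r.f ≫ (𝟙 r.M ⊠ₕ s.f) ≫ (α_ r.M s.M X').inv,
              (α_ r.M s.M Y').hom ≫ (𝟙 r.M ⊠ₕ s.g) ≫ r.g⟩) ∧
      -- the tensor of lenses combines residuals via the symmetry
      (∀ (A₁ B₁ X₁ Y₁ A₂ B₂ X₂ Y₂ : C)
          (r : LensRep A₁ B₁ X₁ Y₁) (s : LensRep A₂ B₂ X₂ Y₂),
          tens A₁ B₁ X₁ Y₁ A₂ B₂ X₂ Y₂ (Quot.mk _ r) (Quot.mk _ s) =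
            Quot.mk _ ⟨r.M ⊠ s.M,
              (r.f ⊠ₕ s.f) ≫ tensorμ r.M X₁ s.M X₂,
              tensorμ r.M s.M Y₁ Y₂ ≫ (r.g ⊠ₕ s.g)⟩) ∧
      -- Get is a functor on the opposite category
      (∀ A : C, getHom (𝟙 A) = lensId (𝟙_ C) A) ∧
      (∀ (A B D : C) (f : B ⟶ A) (g : D ⟶ B),
          getHom (g ≫ f) =
            comp (𝟙_ C) A (𝟙_ C) B (𝟙_ C) D (getHom f) (getHom g)) ∧
      -- the structure morphism μ is natural
      (∀ (A A' B B' : C) (f : A' ⟶ A) (g : B' ⟶ B),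
          comp (𝟙_ C ⊠ 𝟙_ C) (A ⊠ B) (𝟙_ C ⊠ 𝟙_ C) (A' ⊠ B') (𝟙_ C) (A' ⊠ B')
              (tens (𝟙_ C) A (𝟙_ C) A' (𝟙_ C) B (𝟙_ C) B'
                (getHom f) (getHom g))
              (getMu A' B') =
            comp (𝟙_ C ⊠ 𝟙_ C) (A ⊠ B) (𝟙_ C) (A ⊠ B) (𝟙_ C) (A' ⊠ B')
              (getMu A B) (getHom (f ⊠ₕ g))) ∧
      -- μ is invertible
      (∀ A B : C,
          comp (𝟙_ C ⊠ 𝟙_ C) (A ⊠ B) (𝟙_ C) (A ⊠ B) (𝟙_ C ⊠ 𝟙_ C) (A ⊠ B)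
              (getMu A B) (getMuInv A B) = lensId (𝟙_ C ⊠ 𝟙_ C) (A ⊠ B)) ∧
      (∀ A B : C,
          comp (𝟙_ C) (A ⊠ B) (𝟙_ C ⊠ 𝟙_ C) (A ⊠ B) (𝟙_ C) (A ⊠ B)
              (getMuInv A B) (getMu A B) = lensId (𝟙_ C) (A ⊠ B)) ∧
      -- associativity coherence of the strong monoidal structure
      (∀ A B D : C,
          comp ((𝟙_ C ⊠ 𝟙_ C) ⊠ 𝟙_ C) ((A ⊠ B) ⊠ D)
              (𝟙_ C ⊠ 𝟙_ C) ((A ⊠ B) ⊠ D) (𝟙_ C) (A ⊠ (B ⊠ D))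
              (tens (𝟙_ C ⊠ 𝟙_ C) (A ⊠ B) (𝟙_ C) (A ⊠ B) (𝟙_ C) D (𝟙_ C) D
                (getMu A B) (lensId (𝟙_ C) D))
              (comp (𝟙_ C ⊠ 𝟙_ C) ((A ⊠ B) ⊠ D) (𝟙_ C) ((A ⊠ B) ⊠ D)
                (𝟙_ C) (A ⊠ (B ⊠ D))
                (getMu (A ⊠ B) D) (getHom (α_ A B D).inv)) =
            comp ((𝟙_ C ⊠ 𝟙_ C) ⊠ 𝟙_ C) ((A ⊠ B) ⊠ D)
              (𝟙_ C ⊠ (𝟙_ C ⊠ 𝟙_ C)) (A ⊠ (B ⊠ D)) (𝟙_ C) (A ⊠ (B ⊠ D))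
              (assocLens (𝟙_ C) A (𝟙_ C) B (𝟙_ C) D)
              (comp (𝟙_ C ⊠ (𝟙_ C ⊠ 𝟙_ C)) (A ⊠ (B ⊠ D))
                (𝟙_ C ⊠ 𝟙_ C) (A ⊠ (B ⊠ D)) (𝟙_ C) (A ⊠ (B ⊠ D))
                (tens (𝟙_ C) A (𝟙_ C) A (𝟙_ C ⊠ 𝟙_ C) (B ⊠ D) (𝟙_ C) (B ⊠ D)
                  (lensId (𝟙_ C) A) (getMu B D))
                (getMu A (B ⊠ D)))) ∧
      -- left unitality coherence
      (∀ X : C,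
          leftUnitorLens (𝟙_ C) X =
            comp (𝟙_ C ⊠ 𝟙_ C) (𝟙_ C ⊠ X) (𝟙_ C ⊠ 𝟙_ C) (𝟙_ C ⊠ X) (𝟙_ C) X
              (tens (𝟙_ C) (𝟙_ C) (𝟙_ C) (𝟙_ C) (𝟙_ C) X (𝟙_ C) X
                (lensId (𝟙_ C) (𝟙_ C)) (lensId (𝟙_ C) X))
              (comp (𝟙_ C ⊠ 𝟙_ C) (𝟙_ C ⊠ X) (𝟙_ C) (𝟙_ C ⊠ X) (𝟙_ C) X
                (getMu (𝟙_ C) X) (getHom (λ_ X).inv))) ∧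
      -- right unitality coherence
      (∀ X : C,
          rightUnitorLens (𝟙_ C) X =
            comp (𝟙_ C ⊠ 𝟙_ C) (X ⊠ 𝟙_ C) (𝟙_ C ⊠ 𝟙_ C) (X ⊠ 𝟙_ C) (𝟙_ C) X
              (tens (𝟙_ C) X (𝟙_ C) X (𝟙_ C) (𝟙_ C) (𝟙_ C) (𝟙_ C)
                (lensId (𝟙_ C) X) (lensId (𝟙_ C) (𝟙_ C)))
              (comp (𝟙_ C ⊠ 𝟙_ C) (X ⊠ 𝟙_ C) (𝟙_ C) (X ⊠ 𝟙_ C) (𝟙_ C) X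
                (getMu X (𝟙_ C)) (getHom (ρ_ X).inv))) := by
  refine ⟨fun _ _ _ _ _ _ => lensComp, fun _ _ _ _ _ _ _ _ => lensTens,
    fun _ _ _ _ _ _ _ _ => rfl, fun _ _ _ _ _ _ _ _ _ _ => rfl, ?_, ?_, ?_, ?_, ?_, ?_, ?_, ?_⟩
  · intro A
    simp only [getHom, lensId, Category.comp_id]
  · intro A B D f g
    simp only [getHom, lensComp_mk, compRep]
    conv_rhs => rw [lens_move (λ_ (𝟙_ C)).symm]
    refine lensRep_eq ?_ ?_
    · simp only [Iso.symm_hom, Iso.symm_inv]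
      monoidal
    · simp only [Iso.symm_hom, Iso.symm_inv, MonoidalCategory.tensorHom_def]
      monoidal
  · intro A A' B B' f g
    simp only [getHom, getMu, lensOfIsos, lensComp_mk, lensTens_mk, compRep, tensRep]
    conv_rhs => rw [lens_move (ρ_ (𝟙_ C ⊠ 𝟙_ C))]
    refine lensRep_eq ?_ ?_
    · simp only [tensorμ, Iso.symm_hom, Iso.symm_inv, braiding_tensorUnit_left,
        braiding_tensorUnit_right, MonoidalCategory.tensorHom_def, Iso.refl_hom, Iso.refl_inv]
      monoidal
    · simp only [tensorμ, Iso.symm_hom, Iso.symm_inv, braiding_tensorUnit_left,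
        braiding_tensorUnit_right, MonoidalCategory.tensorHom_def, Iso.refl_hom, Iso.refl_inv]
      monoidal
  · intro A B
    simp only [getMu, getMuInv, lensId, lensOfIsos, lensComp_mk, compRep]
    conv_lhs => rw [lens_move (λ_ (𝟙_ C)).symm]
    refine lensRep_eq ?_ ?_
    · simp only [Iso.symm_hom, Iso.symm_inv, Iso.refl_hom, Iso.refl_inv]
      monoidal
    · simp only [Iso.symm_hom, Iso.symm_inv, Iso.refl_hom, Iso.refl_inv]
      monoidal
  · intro A B
    simp only [getMu, getMuInv, lensId, lensOfIsos, lensComp_mk, compRep]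
    conv_lhs => rw [lens_move (λ_ (𝟙_ C)).symm]
    refine lensRep_eq ?_ ?_
    · simp only [Iso.symm_hom, Iso.symm_inv, Iso.refl_hom, Iso.refl_inv]
      monoidal
    · simp only [Iso.symm_hom, Iso.symm_inv, Iso.refl_hom, Iso.refl_inv]
      monoidal
  · intro A B D
    simp only [getMu, getHom, lensId, lensOfIsos, assocLens, lensComp_mk, lensTens_mk,
      compRep, tensRep]
    conv_rhs => rw [lens_move ((MonoidalCategory.tensorIso (λ_ (𝟙_ C)) (Iso.refl (𝟙_ C ⊠ 𝟙_ C))) ≪≫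
      (MonoidalCategory.whiskerLeftIso (𝟙_ C) (ρ_ (𝟙_ C ⊠ 𝟙_ C)).symm))]
    refine lensRep_eq ?_ ?_
    · simp only [tensorμ, Iso.symm_hom, Iso.symm_inv, braiding_tensorUnit_left,
        braiding_tensorUnit_right, MonoidalCategory.tensorHom_def, Iso.trans_hom, Iso.trans_inv,
        MonoidalCategory.tensorIso_hom, MonoidalCategory.tensorIso_inv, Iso.refl_hom, Iso.refl_inv,
        MonoidalCategory.whiskerLeftIso_hom, MonoidalCategory.whiskerLeftIso_inv]
      monoidal
    · simp only [tensorμ, Iso.symm_hom, Iso.symm_inv, braiding_tensorUnit_left,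
        braiding_tensorUnit_right, MonoidalCategory.tensorHom_def, Iso.trans_hom, Iso.trans_inv,
        MonoidalCategory.tensorIso_hom, MonoidalCategory.tensorIso_inv, Iso.refl_hom, Iso.refl_inv,
        MonoidalCategory.whiskerLeftIso_hom, MonoidalCategory.whiskerLeftIso_inv]
      monoidal
  · intro X
    simp only [getMu, getHom, lensId, lensOfIsos, leftUnitorLens, lensComp_mk, lensTens_mk,
      compRep, tensRep]
    conv_rhs => rw [lens_move ((λ_ (𝟙_ C)).symm ≪≫
      MonoidalCategory.tensorIso (λ_ (𝟙_ C)).symm (λ_ (𝟙_ C)).symm)]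
    refine lensRep_eq ?_ ?_
    · simp only [tensorμ, Iso.symm_hom, Iso.symm_inv, braiding_tensorUnit_left,
        braiding_tensorUnit_right, MonoidalCategory.tensorHom_def, Iso.trans_hom, Iso.trans_inv,
        MonoidalCategory.tensorIso_hom, MonoidalCategory.tensorIso_inv]
      monoidal
    · simp only [tensorμ, Iso.symm_hom, Iso.symm_inv, braiding_tensorUnit_left,
        braiding_tensorUnit_right, MonoidalCategory.tensorHom_def, Iso.trans_hom, Iso.trans_inv,
        MonoidalCategory.tensorIso_hom, MonoidalCategory.tensorIso_inv]
      monoidal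
  · intro X
    simp only [getMu, getHom, lensId, lensOfIsos, rightUnitorLens, lensComp_mk, lensTens_mk,
      compRep, tensRep]
    conv_rhs => rw [lens_move ((λ_ (𝟙_ C)).symm ≪≫
      MonoidalCategory.tensorIso (λ_ (𝟙_ C)).symm (λ_ (𝟙_ C)).symm)]
    refine lensRep_eq ?_ ?_
    · simp only [tensorμ, Iso.symm_hom, Iso.symm_inv, braiding_tensorUnit_left,
        braiding_tensorUnit_right, MonoidalCategory.tensorHom_def, Iso.trans_hom, Iso.trans_inv,
        MonoidalCategory.tensorIso_hom, MonoidalCategory.tensorIso_inv]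
      monoidal
    · simp only [tensorμ, Iso.symm_hom, Iso.symm_inv, braiding_tensorUnit_left,
        braiding_tensorUnit_right, MonoidalCategory.tensorHom_def, Iso.trans_hom, Iso.trans_inv,
        MonoidalCategory.tensorIso_hom, MonoidalCategory.tensorIso_inv]
      monoidal
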